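/- Let G=(V,E) be a finite graph with Ric(G) ≥ K for some K ∈ ℝ, and let P_t = exp(tΔ) be the heat semigroup. Then for every f:V→ℝ, every t ≥ 0, and every x∈V, P_t(f²)(x) − (P_t f)²(x) ≥ c_K(t)·Γ(P_t f)(x), where c_K(t) = ∫₀ᵗ 2e^{2Ks} ds (so c_K(t) = (e^{2Kt}−1)/K for K ≠ 0 and c_0(t) = 2t). -/

import Mathlib

/-!
Bakry–Émery semigroup interpolation. For fixed `s`, write `g = P_{s-u} h` and differentiate
`u ↦ P_u Φ(g)`: the result is `P_u (ΔΦ(g) - DΦ(g) Δg)`, which equals `2 P_u Γ(g)` for `Φ(g) = g²`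
and `2 P_u Γ₂(g)` for `Φ = Γ`. As `P_u` preserves order, `Ric ≥ K` makes `u ↦ P_u Γ(g)` satisfy
`F' ≥ 2K F`, and Grönwall gives `e^{2Ks} Γ(P_s h) ≤ P_s Γ(h)`. Taking `h = P_{t-u} f` bounds the
derivative of `u ↦ P_u (P_{t-u} f)²` below by `2 e^{2Ku} Γ(P_t f)`; integrate over `[0, t]`.
-/

noncomputable section
open Matrix

/-- The graph Laplacian: `Δ f (x) = Σ_{y ~ x} (f y - f x)`. -/
def lap {V : Type*} (G : SimpleGraph V) (f : V → ℝ) (x : V) : ℝ :=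
  ∑ᶠ y ∈ {y | G.Adj x y}, (f y - f x)

/-- The carré du champ `Γ(f,g)(x) = (1/2) Σ_{y ~ x} (f x - f y)(g x - g y)`. -/
def gam {V : Type*} (G : SimpleGraph V) (f g : V → ℝ) (x : V) : ℝ :=
  (1/2) * ∑ᶠ y ∈ {y | G.Adj x y}, (f x - f y) * (g x - g y)

/-- The iterated carré du champ `Γ₂(f) = (1/2) Δ Γ(f) - Γ(f, Δ f)`. -/
def gam2 {V : Type*} (G : SimpleGraph V) (f : V → ℝ) (x : V) : ℝ :=
  (1/2) * lap G (gam G f f) x - gam G f (lap G f) x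

/-- `Ric(G) ≥ K` : the Bochner inequality `Γ₂(f)(x) ≥ K Γ(f)(x)` holds for all `f, x`. -/
def RicGE {V : Type*} (G : SimpleGraph V) (K : ℝ) : Prop :=
  ∀ (f : V → ℝ) (x : V), K * gam G f f x ≤ gam2 G f x

open Classical in
/-- Degree of a vertex. -/
def degC {V : Type*} [Fintype V] (G : SimpleGraph V) (x : V) : ℕ :=
  (Finset.univ.filter fun y => G.Adj x y).card

open Classical in
/-- The Laplacian matrix `Δ = A - D` (negative semidefinite). -/
def lapMat {V : Type*} [Fintype V] (G : SimpleGraph V) : Matrix V V ℝ :=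
  Matrix.of fun x y => (if G.Adj x y then (1:ℝ) else 0) - (if x = y then (degC G x : ℝ) else 0)

/-- The spectral gap: least nonzero eigenvalue of `-Δ`. -/
def spectralGap {V : Type*} [Fintype V] (G : SimpleGraph V) : ℝ :=
  sInf {μ : ℝ | μ ≠ 0 ∧ ∃ f : V → ℝ, f ≠ 0 ∧ (-(lapMat G)) *ᵥ f = μ • f}

open Classical in
/-- Number of edges from `A` to its complement. -/
def boundary {V : Type*} [Fintype V] (G : SimpleGraph V) (A : Finset V) : ℕ :=
  ∑ x ∈ A, (Finset.univ.filter fun y => G.Adj x y ∧ y ∉ A).card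

/-- The Cheeger (edge-isoperimetric) constant. -/
def cheeger {V : Type*} [Fintype V] (G : SimpleGraph V) : ℝ :=
  sInf {r : ℝ | ∃ A : Finset V, 0 < A.card ∧ 2 * A.card ≤ Fintype.card V ∧
    r = (boundary G A : ℝ) / (A.card : ℝ)}

/-- The heat semigroup `P_t f = exp(tΔ) f`. -/
def heat {V : Type*} [Fintype V] [DecidableEq V] (G : SimpleGraph V) (t : ℝ) (f : V → ℝ) :
    V → ℝ :=
  (NormedSpace.exp (t • lapMat G)) *ᵥ f


open Set in
theorem mul_exp_le_of_mul_le_deriv_right {F F' : ℝ → ℝ} {c a b : ℝ}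
    (hF : ContinuousOn F (Icc a b)) (hF' : ∀ u ∈ Ico a b, HasDerivWithinAt F (F' u) (Ici u) u)
    (hbound : ∀ u ∈ Ico a b, c * F u ≤ F' u) (hab : a ≤ b) :
    F a * Real.exp (c * (b - a)) ≤ F b := by
  -- Grönwall's inequality for `-F`
  have h := le_gronwallBound_of_liminf_deriv_right_le (K := c) (ε := 0) hF.neg
    (fun u hu _ hr => (hF' u hu).neg.liminf_right_slope_le hr) le_rfl
    (fun u hu => by simp only [Pi.neg_apply]; linarith [hbound u hu]) b (right_mem_Icc.2 hab)
  simp only [gronwallBound_ε0, Pi.neg_apply, neg_mul] at h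
  linarith

namespace Matrix

open NormedSpace

attribute [local instance] Matrix.linftyOpNormedRing Matrix.linftyOpNormedAlgebra

variable {n : Type*} [Fintype n] [DecidableEq n]

theorem exp_apply_nonneg {M : Matrix n n ℝ} (hM : ∀ i j, 0 ≤ M i j) (i j : n) :
    0 ≤ exp M i j := by
  have hentry : HasSum (fun k => ((k.factorial : ℝ)⁻¹ • M ^ k) i j) (exp M i j) :=
    (exp_series_hasSum_exp' (𝕂 := ℝ) M).map (entryAddMonoidHom ℝ i j)
      (continuous_id.matrix_elem i j)
  exact hentry.nonneg fun k => by
    rw [smul_apply]; exact smul_nonneg (by positivity) (pow_apply_nonneg hM k i j)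

theorem exp_smul_apply_nonneg {M : Matrix n n ℝ} (hM : Pairwise fun i j => 0 ≤ M i j) {t : ℝ}
    (ht : 0 ≤ t) (i j : n) : 0 ≤ exp (t • M) i j := by
  -- `t • M + c • 1` is entrywise nonnegative, and `exp (-c • 1)` is the positive scalar `e^{-c}`
  set c := t * ∑ k, |M k k|
  set N := t • M + c • 1
  have hN : ∀ i j, 0 ≤ N i j := by
    intro i j
    rcases eq_or_ne i j with rfl | hij
    · have : -M i i ≤ ∑ k, |M k k| := (neg_le_abs _).trans
        (Finset.single_le_sum (fun k _ => abs_nonneg (M k k)) (Finset.mem_univ i))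
      simp only [N, add_apply, smul_apply, one_apply_eq, smul_eq_mul, mul_one, c]
      nlinarith
    · simpa [N, hij] using mul_nonneg ht (hM hij)
  have hscalar : exp ((-c) • (1 : Matrix n n ℝ)) = Real.exp (-c) • 1 := by
    rw [← Algebra.algebraMap_eq_smul_one, ← Algebra.algebraMap_eq_smul_one, Real.exp_eq_exp_ℝ]
    exact (algebraMap_exp_comm _).symm
  have hsplit : exp (t • M) = Real.exp (-c) • exp N := by
    rw [show t • M = N + (-c) • 1 by simp [N],
      exp_add_of_commute _ _ ((Commute.one_right N).smul_right _), hscalar, Matrix.mul_smul,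
      mul_one]
  rw [hsplit, smul_apply, smul_eq_mul]
  exact mul_nonneg (Real.exp_nonneg _) (exp_apply_nonneg hN i j)

end Matrix

section GraphCalculus

variable {V : Type*} [Fintype V] (G : SimpleGraph V)

open Classical in
theorem lap_eq_sum (f : V → ℝ) (x : V) :
    lap G f x = ∑ y ∈ Finset.univ.filter (G.Adj x), (f y - f x) := by
  rw [lap, ← finsum_mem_coe_finset, Finset.coe_filter_univ]

open Classical in
theorem gam_eq_sum (f g : V → ℝ) (x : V) :
    gam G f g x = (1 / 2) * ∑ y ∈ Finset.univ.filter (G.Adj x), (f x - f y) * (g x - g y) := by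
  rw [gam, ← finsum_mem_coe_finset, Finset.coe_filter_univ]

theorem lap_eq_mulVec (f : V → ℝ) : lap G f = lapMat G *ᵥ f := by
  classical
  ext x
  rw [lap_eq_sum, Finset.sum_sub_distrib, Finset.sum_const, Finset.sum_filter]
  simp only [lapMat, mulVec, dotProduct, of_apply, sub_mul, ite_mul, one_mul, zero_mul,
    Finset.sum_sub_distrib, Finset.sum_ite_eq, Finset.mem_univ, if_true, degC, nsmul_eq_mul]

theorem gam_neg_right (f g : V → ℝ) (x : V) : gam G f (-g) x = -gam G f g x := by
  classical
  simp only [gam_eq_sum, Pi.neg_apply, ← mul_neg, ← Finset.sum_neg_distrib]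
  congr 1
  exact Finset.sum_congr rfl fun y _ => by ring

theorem lap_sq (f : V → ℝ) (x : V) :
    lap G (fun v => f v ^ 2) x = 2 * f x * lap G f x + 2 * gam G f f x := by
  classical
  simp only [lap_eq_sum, gam_eq_sum, Finset.mul_sum, ← Finset.sum_add_distrib]
  exact Finset.sum_congr rfl fun y _ => by ring

theorem hasDerivAt_gam {g : ℝ → V → ℝ} {g' : V → ℝ} {u : ℝ}
    (hg : ∀ v, HasDerivAt (fun r => g r v) (g' v) u) (x : V) :
    HasDerivAt (fun r => gam G (g r) (g r) x) (2 * gam G (g u) g' x) u := by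
  classical
  simp only [gam_eq_sum]
  refine ((HasDerivAt.fun_sum fun y _ =>
    ((hg x).fun_sub (hg y)).fun_mul ((hg x).fun_sub (hg y))).const_mul (1 / 2 : ℝ)).congr_deriv ?_
  rw [← mul_assoc, Finset.mul_sum, Finset.mul_sum]
  exact Finset.sum_congr rfl fun y _ => by ring

end GraphCalculus

section Heat

open NormedSpace

attribute [local instance] Matrix.linftyOpNormedRing Matrix.linftyOpNormedAlgebra

variable {V : Type*} [Fintype V] [DecidableEq V] (G : SimpleGraph V)

theorem heat_zero (f : V → ℝ) : heat G 0 f = f := by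
  simp [heat]

theorem heat_add (s t : ℝ) (f : V → ℝ) : heat G (s + t) f = heat G s (heat G t f) := by
  rw [heat, heat, heat, mulVec_mulVec, add_smul,
    Matrix.exp_add_of_commute _ _ (((Commute.refl _).smul_left s).smul_right t)]

theorem lap_heat (t : ℝ) (f : V → ℝ) : lap G (heat G t f) = heat G t (lap G f) := by
  simp only [heat, lap_eq_mulVec, mulVec_mulVec, ((Commute.refl _).smul_right t).exp_right.eq]

theorem heat_const_mul (c t : ℝ) (f : V → ℝ) (x : V) :
    heat G t (fun v => c * f v) x = c * heat G t f x :=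
  congrFun (mulVec_smul _ c f) x

theorem heat_mono {t : ℝ} (ht : 0 ≤ t) {f g : V → ℝ} (hfg : f ≤ g) : heat G t f ≤ heat G t g := by
  have hoff : Pairwise fun x y => 0 ≤ lapMat G x y := fun x y hxy => by
    simp only [lapMat, of_apply, if_neg hxy, sub_zero]
    split_ifs <;> norm_num
  intro x
  exact Finset.sum_le_sum fun y _ =>
    mul_le_mul_of_nonneg_left (hfg y) (Matrix.exp_smul_apply_nonneg hoff ht x y)

theorem hasDerivAt_heat_apply {w : ℝ → V → ℝ} {w' : V → ℝ} {u : ℝ}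
    (hw : ∀ v, HasDerivAt (fun r => w r v) (w' v) u) (x : V) :
    HasDerivAt (fun r => heat G r (w r) x) (heat G u (lap G (w u) + w') x) u := by
  have hexp : ∀ y, HasDerivAt (fun r : ℝ => exp (r • lapMat G) x y)
      ((exp (u • lapMat G) * lapMat G) x y) u :=
    fun y => (entryLinearMap ℝ ℝ x y).toContinuousLinearMap.hasFDerivAt.comp_hasDerivAt u
      (hasDerivAt_exp_smul_const (lapMat G) u)
  refine (HasDerivAt.fun_sum fun y _ => (hexp y).mul (hw y)).congr_deriv ?_
  rw [heat, lap_eq_mulVec, mulVec_add, mulVec_mulVec]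
  simp only [Pi.add_apply, mulVec, dotProduct, Finset.sum_add_distrib]

theorem hasDerivAt_heat (f : V → ℝ) (x : V) (u : ℝ) :
    HasDerivAt (fun r => heat G r f x) (lap G (heat G u f) x) u := by
  refine (hasDerivAt_heat_apply G (w := fun _ => f) (fun v => hasDerivAt_const u (f v)) x
    ).congr_deriv ?_
  rw [lap_heat, show (lap G f + fun _ => (0 : ℝ)) = lap G f from add_zero _]

theorem hasDerivAt_heat_sub (s : ℝ) (f : V → ℝ) (x : V) (u : ℝ) :
    HasDerivAt (fun r => heat G (s - r) f x) (-lap G (heat G (s - u) f) x) u :=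
  (hasDerivAt_heat G f x (s - u)).comp_const_sub s u

theorem hasDerivAt_heat_sq_heat_sub (s : ℝ) (f : V → ℝ) (x : V) (u : ℝ) :
    HasDerivAt (fun r => heat G r (fun v => heat G (s - r) f v ^ 2) x)
      (2 * heat G u (gam G (heat G (s - u) f) (heat G (s - u) f)) x) u := by
  have hsq : ∀ v, HasDerivAt (fun r => heat G (s - r) f v ^ 2)
      (2 * heat G (s - u) f v * -lap G (heat G (s - u) f) v) u := by
    intro v
    simpa using (hasDerivAt_heat_sub G s f v u).fun_pow 2
  refine (hasDerivAt_heat_apply G hsq x).congr_deriv ?_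
  rw [← heat_const_mul]
  congr 1 with v
  simp only [Pi.add_apply, lap_sq]
  ring

theorem hasDerivAt_heat_gam_heat_sub (s : ℝ) (f : V → ℝ) (x : V) (u : ℝ) :
    HasDerivAt (fun r => heat G r (gam G (heat G (s - r) f) (heat G (s - r) f)) x)
      (2 * heat G u (gam2 G (heat G (s - u) f)) x) u := by
  have hgam : ∀ v, HasDerivAt (fun r => gam G (heat G (s - r) f) (heat G (s - r) f) v)
      (2 * gam G (heat G (s - u) f) (-lap G (heat G (s - u) f)) v) u :=
    hasDerivAt_gam G fun v => hasDerivAt_heat_sub G s f v u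
  refine (hasDerivAt_heat_apply G hgam x).congr_deriv ?_
  rw [← heat_const_mul]
  congr 1 with v
  simp only [Pi.add_apply, gam_neg_right, gam2]
  ring

end Heat

theorem exp_mul_gam_heat_le_heat_gam {V : Type*} [Fintype V] [DecidableEq V] (G : SimpleGraph V)
    {K : ℝ} (hric : RicGE G K) (f : V → ℝ) {s : ℝ} (hs : 0 ≤ s) (x : V) :
    Real.exp (2 * K * s) * gam G (heat G s f) (heat G s f) x ≤ heat G s (gam G f f) x := by
  have hderiv := hasDerivAt_heat_gam_heat_sub G s f x
  have h := mul_exp_le_of_mul_le_deriv_right (c := 2 * K)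
    (fun u _ => (hderiv u).continuousAt.continuousWithinAt)
    (fun u _ => (hderiv u).hasDerivWithinAt) (fun u hu => ?_) hs
  · simpa [heat_zero, mul_comm] using h
  · rw [mul_assoc, ← heat_const_mul]
    exact mul_le_mul_of_nonneg_left (heat_mono G hu.1 (fun v => hric _ v) x) zero_le_two

/-- if `Ric(G) ≥ K` then
`P_t(f²) - (P_t f)² ≥ c_K(t) Γ(P_t f)` pointwise for `t ≥ 0`, where
`c_K(t) = ∫₀ᵗ 2 e^{2Ks} ds`. -/
theorem variance_heat_estimate {V : Type*} [Fintype V] [DecidableEq V] (G : SimpleGraph V)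
    (K : ℝ) (hric : RicGE G K) (f : V → ℝ) (t : ℝ) (ht : 0 ≤ t) (x : V) :
    (∫ s in (0 : ℝ)..t, 2 * Real.exp (2 * K * s))
        * gam G (heat G t f) (heat G t f) x
      ≤ heat G t (fun v => f v ^ 2) x - (heat G t f x) ^ 2 := by
  have hderiv := hasDerivAt_heat_sq_heat_sub G t f x
  have hlower : ∀ u ∈ Set.Ioo 0 t,
      2 * Real.exp (2 * K * u) * gam G (heat G t f) (heat G t f) x ≤
        2 * heat G u (gam G (heat G (t - u) f) (heat G (t - u) f)) x := by
    intro u hu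
    have h := exp_mul_gam_heat_le_heat_gam G hric (heat G (t - u) f) hu.1.le x
    rw [← heat_add, add_sub_cancel] at h
    linarith
  have h := intervalIntegral.integral_le_sub_of_hasDeriv_right_of_le ht
    (fun u _ => (hderiv u).continuousAt.continuousWithinAt)
    (fun u _ => (hderiv u).hasDerivWithinAt) (by fun_prop : Continuous _).integrableOn_Icc hlower
  rw [intervalIntegral.integral_mul_const] at h
  simpa [heat_zero] using h
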